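/- Let U ⊆ ℝ² be open, let u : U → ℝ be a C² solution of u_yy = (u_y + 2x)·u_xx + (y − u_x)·u_xy − u_x, let c ∈ ℝ, and let a, b : U → ℝ be C² functions satisfying on all of U: b_x = a_y + u_x·a_x and b_y = (u_y + 2x)·a_x + y·a_y − c·a. For a C² function f : U → ℝ and m ∈ ℝ define C_m(f) := f_yy + (u_x − y)·f_xy − (u_y + 2x)·f_xx + m·f_x. Then C_{c−1}(b) = y·C_{c−2}(a) at every point of U. -/

import Mathlib

/-!
Differentiate the two equations defining `b` once more. Inserting `b_xx`, `b_xy`, `b_yy` into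
`C_{c-1}(b)` leaves an expression in `a`, `u` and their derivatives in which, after
`a_xy = a_yx` and the substitution of `u_yy` by equation (3), everything except
`y · C_{c-2}(a)` cancels.
-/

open Filter

/-- Partial derivative of `f : ℝ² → ℝ` in the direction `v`. -/
noncomputable def pd2 (v : ℝ × ℝ) (f : ℝ × ℝ → ℝ) : ℝ × ℝ → ℝ :=
  fun p => fderiv ℝ f p v

noncomputable def dx : (ℝ × ℝ → ℝ) → ℝ × ℝ → ℝ := pd2 (1, 0)
noncomputable def dy : (ℝ × ℝ → ℝ) → ℝ × ℝ → ℝ := pd2 (0, 1)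

/-- The compatibility obstruction operator for equation (3):
`C_m(f) = f_yy + (u_x − y)·f_xy − (u_y + 2x)·f_xx + m·f_x`. -/
noncomputable def Cop (u : ℝ × ℝ → ℝ) (m : ℝ) (f : ℝ × ℝ → ℝ) : ℝ × ℝ → ℝ :=
  fun p => dy (dy f) p + (dx u p - p.2) * dx (dy f) p
    - (dy u p + 2 * p.1) * dx (dx f) p + m * dx f p

section Calculus

variable {f g : ℝ × ℝ → ℝ} {p : ℝ × ℝ}

lemma Filter.EventuallyEq.pd2_eq (v : ℝ × ℝ) (h : f =ᶠ[nhds p] g) :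
    pd2 v f p = pd2 v g p := by
  simp only [pd2, h.fderiv_eq]

lemma pd2_add (v : ℝ × ℝ) (hf : DifferentiableAt ℝ f p) (hg : DifferentiableAt ℝ g p) :
    pd2 v (fun q => f q + g q) p = pd2 v f p + pd2 v g p := by
  simp only [pd2, fderiv_fun_add hf hg, add_apply]

lemma pd2_sub (v : ℝ × ℝ) (hf : DifferentiableAt ℝ f p) (hg : DifferentiableAt ℝ g p) :
    pd2 v (fun q => f q - g q) p = pd2 v f p - pd2 v g p := by
  simp only [pd2, fderiv_fun_sub hf hg, sub_apply]

lemma pd2_mul (v : ℝ × ℝ) (hf : DifferentiableAt ℝ f p) (hg : DifferentiableAt ℝ g p) :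
    pd2 v (fun q => f q * g q) p = pd2 v f p * g p + f p * pd2 v g p := by
  simp only [pd2, fderiv_fun_mul hf hg, add_apply, smul_apply, smul_eq_mul]
  ring

lemma pd2_const_mul (v : ℝ × ℝ) (k : ℝ) (hf : DifferentiableAt ℝ f p) :
    pd2 v (fun q => k * f q) p = k * pd2 v f p := by
  simp only [pd2, fderiv_const_mul hf k, smul_apply, smul_eq_mul]

lemma pd2_fst (v : ℝ × ℝ) : pd2 v (fun q : ℝ × ℝ => q.1) p = v.1 := by
  simp [pd2, fderiv_fst]

lemma pd2_snd (v : ℝ × ℝ) : pd2 v (fun q : ℝ × ℝ => q.2) p = v.2 := by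
  simp [pd2, fderiv_snd]

lemma ContDiffAt.differentiableAt_fderiv (hf : ContDiffAt ℝ 2 f p) :
    DifferentiableAt ℝ (fderiv ℝ f) p :=
  (hf.fderiv_right (m := 1) (by norm_num)).differentiableAt one_ne_zero

lemma ContDiffAt.differentiableAt_pd2 (hf : ContDiffAt ℝ 2 f p) (v : ℝ × ℝ) :
    DifferentiableAt ℝ (pd2 v f) p :=
  (ContinuousLinearMap.apply ℝ ℝ v).differentiableAt.comp p hf.differentiableAt_fderiv

lemma ContDiffAt.differentiableAt_dx (hf : ContDiffAt ℝ 2 f p) :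
    DifferentiableAt ℝ (dx f) p :=
  hf.differentiableAt_pd2 _

lemma ContDiffAt.differentiableAt_dy (hf : ContDiffAt ℝ 2 f p) :
    DifferentiableAt ℝ (dy f) p :=
  hf.differentiableAt_pd2 _

lemma ContDiffAt.pd2_pd2 (hf : ContDiffAt ℝ 2 f p) (v w : ℝ × ℝ) :
    pd2 w (pd2 v f) p = fderiv ℝ (fderiv ℝ f) p w v := by
  change fderiv ℝ (ContinuousLinearMap.apply ℝ ℝ v ∘ fderiv ℝ f) p w = _
  rw [fderiv_comp p (ContinuousLinearMap.apply ℝ ℝ v).differentiableAt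
    hf.differentiableAt_fderiv]
  simp

lemma ContDiffAt.pd2_pd2_comm (hf : ContDiffAt ℝ 2 f p) (v w : ℝ × ℝ) :
    pd2 w (pd2 v f) p = pd2 v (pd2 w f) p := by
  rw [hf.pd2_pd2, hf.pd2_pd2]
  exact (hf.isSymmSndFDerivAt (by simp)).eq w v

lemma ContDiffAt.dy_dx (hf : ContDiffAt ℝ 2 f p) : dy (dx f) p = dx (dy f) p :=
  hf.pd2_pd2_comm (1, 0) (0, 1)

end Calculus

section Covering

variable {u a : ℝ × ℝ → ℝ} {p : ℝ × ℝ}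

lemma pd2_covering_x (hu : ContDiffAt ℝ 2 u p) (ha : ContDiffAt ℝ 2 a p) (v : ℝ × ℝ) :
    pd2 v (fun q => dy a q + dx u q * dx a q) p
      = pd2 v (dy a) p + pd2 v (dx u) p * dx a p + dx u p * pd2 v (dx a) p := by
  rw [pd2_add v ha.differentiableAt_dy (hu.differentiableAt_dx.fun_mul ha.differentiableAt_dx),
    pd2_mul v hu.differentiableAt_dx ha.differentiableAt_dx, add_assoc]

lemma pd2_covering_y (hu : ContDiffAt ℝ 2 u p) (ha : ContDiffAt ℝ 2 a p) (c : ℝ)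
    (v : ℝ × ℝ) :
    pd2 v (fun q => (dy u q + 2 * q.1) * dx a q + q.2 * dy a q - c * a q) p
      = (pd2 v (dy u) p + 2 * v.1) * dx a p + (dy u p + 2 * p.1) * pd2 v (dx a) p
        + v.2 * dy a p + p.2 * pd2 v (dy a) p - c * pd2 v a p := by
  have hx2 : DifferentiableAt ℝ (fun q : ℝ × ℝ => 2 * q.1) p :=
    differentiableAt_fst.const_mul 2
  have hcoeff : DifferentiableAt ℝ (fun q => dy u q + 2 * q.1) p :=
    hu.differentiableAt_dy.add hx2
  have hax := ha.differentiableAt_dx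
  have hay := ha.differentiableAt_dy
  have ha1 : DifferentiableAt ℝ a p := ha.differentiableAt two_ne_zero
  rw [pd2_sub v ((hcoeff.fun_mul hax).fun_add (differentiableAt_snd.fun_mul hay))
      (ha1.const_mul c),
    pd2_add v (hcoeff.fun_mul hax) (differentiableAt_snd.fun_mul hay),
    pd2_mul v hcoeff hax, pd2_mul v differentiableAt_snd hay,
    pd2_add v hu.differentiableAt_dy hx2, pd2_const_mul v 2 differentiableAt_fst,
    pd2_fst, pd2_snd, pd2_const_mul v c ha1]
  ring

theorem Cop_eq_mul_Cop_of_covering {b : ℝ × ℝ → ℝ} {c : ℝ}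
    (hu : ContDiffAt ℝ 2 u p) (ha : ContDiffAt ℝ 2 a p)
    (hueq : dy (dy u) p = (dy u p + 2 * p.1) * dx (dx u) p
        + (p.2 - dx u p) * dx (dy u) p - dx u p)
    (hbx : dx b =ᶠ[nhds p] fun q => dy a q + dx u q * dx a q)
    (hby : dy b =ᶠ[nhds p] fun q => (dy u q + 2 * q.1) * dx a q + q.2 * dy a q - c * a q) :
    Cop u (c - 1) b p = p.2 * Cop u (c - 2) a p := by
  have b_xx : dx (dx b) p = _ := (hbx.pd2_eq (1, 0)).trans (pd2_covering_x hu ha (1, 0))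
  have b_xy : dx (dy b) p = _ := (hby.pd2_eq (1, 0)).trans (pd2_covering_y hu ha c (1, 0))
  have b_yy : dy (dy b) p = _ := (hby.pd2_eq (0, 1)).trans (pd2_covering_y hu ha c (0, 1))
  have a_xy := ha.dy_dx
  rw [Cop, Cop, b_xx, b_xy, b_yy, hbx.eq_of_nhds]
  simp only [dx, dy] at hueq a_xy ⊢
  rw [hueq, a_xy]
  ring

end Covering

theorem covering_compatibility_eq3_general (U : Set (ℝ × ℝ)) (hU : IsOpen U)
    (u a b : ℝ × ℝ → ℝ) (c : ℝ)
    (hu : ContDiffOn ℝ 2 u U)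
    (ha : ContDiffOn ℝ 2 a U)
    (hueq : ∀ p ∈ U,
      dy (dy u) p = (dy u p + 2 * p.1) * dx (dx u) p
        + (p.2 - dx u p) * dx (dy u) p - dx u p)
    (hbx : ∀ p ∈ U, dx b p = dy a p + dx u p * dx a p)
    (hby : ∀ p ∈ U, dy b p = (dy u p + 2 * p.1) * dx a p + p.2 * dy a p - c * a p) :
    ∀ p ∈ U, Cop u (c - 1) b p = p.2 * Cop u (c - 2) a p := by
  intro p hp
  have hUp : U ∈ nhds p := hU.mem_nhds hp
  exact Cop_eq_mul_Cop_of_covering (hu.contDiffAt hUp) (ha.contDiffAt hUp) (hueq p hp)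
    (eventually_of_mem hUp hbx) (eventually_of_mem hUp hby)

theorem covering_compatibility_eq3 (U : Set (ℝ × ℝ)) (hU : IsOpen U)
    (u a b : ℝ × ℝ → ℝ) (c : ℝ)
    (hu : ContDiffOn ℝ 2 u U)
    (ha : ContDiffOn ℝ 2 a U) (hb : ContDiffOn ℝ 2 b U)
    (hueq : ∀ p ∈ U,
      dy (dy u) p = (dy u p + 2 * p.1) * dx (dx u) p
        + (p.2 - dx u p) * dx (dy u) p - dx u p)
    (hbx : ∀ p ∈ U, dx b p = dy a p + dx u p * dx a p)
    (hby : ∀ p ∈ U, dy b p = (dy u p + 2 * p.1) * dx a p + p.2 * dy a p - c * a p) :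
    ∀ p ∈ U, Cop u (c - 1) b p = p.2 * Cop u (c - 2) a p :=
  covering_compatibility_eq3_general U hU u a b c hu ha hueq hbx hby
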